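/- Assume (A1)–(A4), (Aa), (Ab), (Ac), and that λ and Q do not depend on the control variable a. Let m ≥ 1 and suppose that v_{m−1}^δ(·,γ) is continuous on Ḡ for every γ ∈ E. Then for every T > 0 and every (x,γ) ∈ Ḡ × E: v_m^δ(x,γ) = inf over α ∈ 𝒜_{γ,x} of { ∫_0^T e^{−δt} Λ(t) [ l_γ(y(t), α(t)) + λ(y(t),γ) Σ_{γ′∈E} Q(y(t),γ,γ′) v_{m−1}^δ(y(t),γ′) ] dt + e^{−δT} Λ(T) v_m^δ(y(T),γ) }, where y(t) = y_γ(t;x,α) and Λ(t) = exp(−∫_0^t λ(y(s),γ) ds). (This is the dynamic programming principle for the iterated value functions on the horizon T.) -/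

import Mathlib

open MeasureTheory Set Real Filter
open scoped RealInnerProductSpace BigOperators Topology

noncomputable section

/-- `Vec n` is Euclidean space `ℝ^n`. -/
abbrev Vec (n : ℕ) : Type := EuclideanSpace ℝ (Fin n)

/-- `y` is the (absolutely continuous) trajectory of the controlled ODE
`y'(t) = f(y(t), α(t))`, `y(0) = x`, written in integral form. -/
def IsTraj {m : ℕ} {U : Type} (f : Vec m → U → Vec m) (x : Vec m) (α : ℝ → U)
    (y : ℝ → Vec m) : Prop :=
  ∀ t : ℝ, 0 ≤ t → y t = x + ∫ s in (0:ℝ)..t, f (y s) (α s)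

/-- `(α, y)` is an admissible control/trajectory pair: `α` is Borel measurable with
values in `A`, `y` is the corresponding trajectory and it stays in `S` for `t ≥ 0`. -/
def AdmPair {m : ℕ} {U : Type} [MeasurableSpace U] (f : Vec m → U → Vec m)
    (A : Set U) (S : Set (Vec m)) (x : Vec m) (α : ℝ → U) (y : ℝ → Vec m) : Prop :=
  Measurable α ∧ (∀ t : ℝ, α t ∈ A) ∧ IsTraj f x α y ∧ ∀ t : ℝ, 0 ≤ t → y t ∈ S

/-- The closed star-shaped network `Ḡ = ∪_j [0,1] e_j`. -/
def Gbar {m N : ℕ} (e : Fin N → Vec m) : Set (Vec m) :=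
  ⋃ j, (fun r : ℝ => r • e j) '' Icc (0:ℝ) 1

/-- `𝒢 = ∪_j [0,1) e_j`. -/
def GbarOpen {m N : ℕ} (e : Fin N → Vec m) : Set (Vec m) :=
  ⋃ j, (fun r : ℝ => r • e j) '' Ico (0:ℝ) 1

/-- The open branch `J_j = (0,1) e_j`. -/
def Jbranch {m N : ℕ} (e : Fin N → Vec m) (j : Fin N) : Set (Vec m) :=
  (fun r : ℝ => r • e j) '' Ioo (0:ℝ) 1

/-- The constant control `a` is locally admissible at `x` (keeps some trajectory in `S`
on a nontrivial interval `[0,θ]`). -/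
def LocAdm {m : ℕ} {U : Type} (f : Vec m → U → Vec m) (S : Set (Vec m)) (x : Vec m)
    (a : U) : Prop :=
  ∃ θ > (0:ℝ), ∃ y : ℝ → Vec m,
    IsTraj f x (fun _ => a) y ∧ ∀ t ∈ Icc (0:ℝ) θ, y t ∈ S

/-- The set `A_{γ,x}` of locally admissible constant controls at `x`. -/
def LocAdmSet {m : ℕ} {U : Type} (f : Vec m → U → Vec m) (A : Set U) (S : Set (Vec m))
    (x : Vec m) : Set U :=
  {a ∈ A | LocAdm f S x a}

/-- Assumption (A1). -/
def AssumptionA1 {m d : ℕ} {E : Type} (A : Set (Vec d)) (f : E → Vec m → Vec d → Vec m)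
    (C : ℝ) : Prop :=
  ∀ γ : E, UniformContinuousOn (fun p : Vec m × Vec d => f γ p.1 p.2) (univ ×ˢ A) ∧
    (∀ x y : Vec m, ∀ a ∈ A, ⟪f γ x a - f γ y a, x - y⟫ ≤ C * ‖x - y‖ ^ 2) ∧
    (∀ x : Vec m, ∀ a ∈ A, ‖f γ x a‖ ≤ C)

/-- Assumption (A2). -/
def AssumptionA2 {m d : ℕ} {E : Type} (A : Set (Vec d))
    (lam : Vec m → E → Vec d → ℝ) (C : ℝ) : Prop :=
  ∀ γ : E, UniformContinuousOn (fun p : Vec m × Vec d => lam p.1 γ p.2) (univ ×ˢ A) ∧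
    ∀ x y : Vec m, ∀ a ∈ A, 0 ≤ lam x γ a ∧ lam x γ a ≤ C ∧
      |lam x γ a - lam y γ a| ≤ C * ‖x - y‖

/-- Assumption (A3). -/
def AssumptionA3 {m d : ℕ} {E : Type} [Fintype E] (A : Set (Vec d))
    (Q : Vec m → E → E → Vec d → ℝ) (C : ℝ) : Prop :=
  ∀ (x y : Vec m) (γ : E), ∀ a ∈ A,
    (∀ γ' : E, 0 ≤ Q x γ γ' a ∧ Q x γ γ' a ≤ 1) ∧
    (∑ γ' : E, Q x γ γ' a) = 1 ∧ Q x γ γ a = 0 ∧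
    (∀ γ' : E, |Q x γ γ' a - Q y γ γ' a| ≤ C * ‖x - y‖)

/-- Assumption (A4). -/
def AssumptionA4 {m d : ℕ} {E : Type} (A : Set (Vec d)) (l : E → Vec m → Vec d → ℝ)
    (C : ℝ) : Prop :=
  ∀ γ : E, UniformContinuousOn (fun p : Vec m × Vec d => l γ p.1 p.2) (univ ×ˢ A) ∧
    ∀ x y : Vec m, ∀ a ∈ A, |l γ x a| ≤ C ∧ |l γ x a - l γ y a| ≤ C * ‖x - y‖

/-- Assumption (Aa). -/
def AssumptionAa {m d N : ℕ} {E : Type} (e : Fin N → Vec m) (A : Set (Vec d))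
    (f : E → Vec m → Vec d → Vec m) (Asets : E → Fin N → Set (Vec d)) (β : ℝ) : Prop :=
  (∀ (γ : E) (j : Fin N), (Asets γ j).Nonempty ∧ Asets γ j ⊆ A) ∧
  (∀ (γ : E) (j : Fin N), ∀ x ∈ Jbranch e j,
      LocAdmSet (f γ) A (Gbar e) x = Asets γ j) ∧
  (∀ γ : E, LocAdmSet (f γ) A (Gbar e) 0
      = ⋃ j, {a ∈ Asets γ j | ∃ r : ℝ, 0 ≤ r ∧ f γ 0 a = r • e j}) ∧
  (∀ (γ : E) (j : Fin N),
      LocAdmSet (f γ) A (Gbar e) (e j) = {a ∈ Asets γ j | ⟪f γ (e j) a, e j⟫ ≤ 0} ∧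
      {a ∈ Asets γ j | ⟪f γ (e j) a, e j⟫ ≤ 0}.Nonempty) ∧
  (∀ (γ : E) (j : Fin N),
      {a ∈ Asets γ j | ⟪f γ (e j) a, e j⟫ ≤ 0} = Asets γ j ∨
      ∃ a ∈ Asets γ j, ⟪f γ (e j) a, e j⟫ < -β)

/-- Assumption (Ab); `act j` is the set of modes for which branch `j` is active. -/
def AssumptionAb {m d N : ℕ} {E : Type} (e : Fin N → Vec m)
    (f : E → Vec m → Vec d → Vec m) (Asets : E → Fin N → Set (Vec d))
    (act : Fin N → Set E) (β η κ : ℝ) : Prop :=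
  (∀ (j : Fin N), ∀ γ ∈ act j,
      ∃ ap ∈ Asets γ j, ∃ am ∈ Asets γ j,
        β < ⟪f γ 0 ap, e j⟫ ∧ ⟪f γ 0 am, e j⟫ < -β) ∧
  (∀ (j : Fin N), ∀ γ : E, γ ∉ act j →
      (∃ am ∈ Asets γ j, ∀ x ∈ Jbranch e j, ‖x‖ ≤ η →
          ⟪f γ x am, e j⟫ ≤ -β * ⟪x, e j⟫ ^ κ) ∧
      (∃ a0 ∈ Asets γ j, f γ 0 a0 = 0) ∧
      (∀ a ∈ Asets γ j, ∀ x ∈ Jbranch e j, ‖x‖ ≤ η → ⟪f γ x a, e j⟫ ≤ 0))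

/-- Assumption (Ac). -/
def AssumptionAc {m d N : ℕ} {E : Type} (l : E → Vec m → Vec d → ℝ)
    (Asets : E → Fin N → Set (Vec d)) (act : Fin N → Set E) : Prop :=
  ∀ (j : Fin N), ∀ γ : E, γ ∉ act j →
    ∀ a ∈ Asets γ j, ∀ b ∈ Asets γ j, l γ 0 a = l γ 0 b

/-- Assumption (Ac'). -/
def AssumptionAc' {m d N : ℕ} {E : Type} (lam : Vec m → E → Vec d → ℝ)
    (Q : Vec m → E → E → Vec d → ℝ) (Asets : E → Fin N → Set (Vec d))
    (act : Fin N → Set E) : Prop :=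
  ∀ (j : Fin N), ∀ γ : E, γ ∉ act j → ∀ a ∈ Asets γ j, ∀ b ∈ Asets γ j,
    lam 0 γ a = lam 0 γ b ∧ ∀ γ' : E, Q 0 γ γ' a = Q 0 γ γ' b

/-- Assumption (Ad). -/
def AssumptionAd {m d N : ℕ} {E : Type} (e : Fin N → Vec m) (A : Set (Vec d))
    (f : E → Vec m → Vec d → Vec m) (Asets : E → Fin N → Set (Vec d)) : Prop :=
  ∀ (j : Fin N) (γ : E), ∀ x ∈ Jbranch e j, ∃ θ > (0:ℝ),
    ∀ (α : ℝ → Vec d) (y : ℝ → Vec m), AdmPair (f γ) A (Gbar e) x α y →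
      ∀ᵐ t ∂(volume.restrict (Icc (0:ℝ) θ)), α t ∈ Asets γ j

/-- The set of discounted costs of admissible control/trajectory pairs (deterministic
problem); its infimum is the value function `v_0^δ`. -/
def v0Set {m : ℕ} {U E : Type} [MeasurableSpace U] (δ : ℝ)
    (f : E → Vec m → U → Vec m) (A : E → Set U) (S : Set (Vec m))
    (l : E → Vec m → U → ℝ) (x : Vec m) (γ : E) : Set ℝ :=
  {c | ∃ (α : ℝ → U) (y : ℝ → Vec m), AdmPair (f γ) (A γ) S x α y ∧
        c = ∫ t in Ioi (0:ℝ), exp (-(δ * t)) * l γ (y t) (α t)}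

/-- The set of one-jump iterated discounted costs with continuation value `w`;
its infimum is the iterated value function  `v_{m+1}^δ` when `w = v_m^δ`. -/
def iterSet {m : ℕ} {U E : Type} [MeasurableSpace U] [Fintype E] (δ : ℝ)
    (f : E → Vec m → U → Vec m) (A : E → Set U) (S : Set (Vec m))
    (l : E → Vec m → U → ℝ) (lam : Vec m → E → U → ℝ)
    (Q : Vec m → E → E → U → ℝ) (w : Vec m → E → ℝ) (x : Vec m) (γ : E) : Set ℝ :=
  {c | ∃ (α : ℝ → U) (y : ℝ → Vec m), AdmPair (f γ) (A γ) S x α y ∧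
        c = ∫ t in Ioi (0:ℝ),
              exp (-(δ * t)) * exp (-(∫ s in (0:ℝ)..t, lam (y s) γ (α s))) *
              (l γ (y t) (α t) +
                lam (y t) γ (α t) * ∑ γ' : E, Q (y t) γ γ' (α t) * w (y t) γ')}

/-- The set of costs appearing in the dynamic programming principle on horizon `T`,
with running continuation value `wcont` and terminal value `wend`. -/
def dppSet {m : ℕ} {U E : Type} [MeasurableSpace U] [Fintype E] (δ T : ℝ)
    (f : E → Vec m → U → Vec m) (A : E → Set U) (S : Set (Vec m))
    (l : E → Vec m → U → ℝ) (lam : Vec m → E → U → ℝ)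
    (Q : Vec m → E → E → U → ℝ) (wcont wend : Vec m → E → ℝ)
    (x : Vec m) (γ : E) : Set ℝ :=
  {c | ∃ (α : ℝ → U) (y : ℝ → Vec m), AdmPair (f γ) (A γ) S x α y ∧
        c = (∫ t in (0:ℝ)..T,
              exp (-(δ * t)) * exp (-(∫ s in (0:ℝ)..t, lam (y s) γ (α s))) *
              (l γ (y t) (α t) +
                lam (y t) γ (α t) * ∑ γ' : E, Q (y t) γ γ' (α t) * wcont (y t) γ'))
            + exp (-(δ * T)) * exp (-(∫ s in (0:ℝ)..T, lam (y s) γ (α s)))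
              * wend (y T) γ}

/-- The tangent cone `T_x(Ḡ)` to the star network at `x`. -/
def TangentG {m N : ℕ} (e : Fin N → Vec m) (x : Vec m) : Set (Vec m) :=
  {ξ | (x = 0 ∧ ∃ (j : Fin N) (r : ℝ), 0 ≤ r ∧ ξ = r • e j) ∨
       (∃ j : Fin N, x = e j ∧ ∃ r : ℝ, r ≤ 0 ∧ ξ = r • e j) ∨
       (∃ j : Fin N, x ∈ Jbranch e j ∧ ∃ r : ℝ, ξ = r • e j)}

/-- `fl(x,γ,a) = (f_γ(x,a), λ(x,γ,a) Q(x,γ,·,a), l_γ(x,a))`. -/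
def flMap {m d : ℕ} {E : Type} (f : E → Vec m → Vec d → Vec m)
    (lam : Vec m → E → Vec d → ℝ) (Q : Vec m → E → E → Vec d → ℝ)
    (l : E → Vec m → Vec d → ℝ) (x : Vec m) (γ : E) :
    Vec d → Vec m × (E → ℝ) × ℝ :=
  fun a => (f γ x a, fun γ' => lam x γ a * Q x γ γ' a, l γ x a)

/-- The set `FL(x,γ)` of relaxed dynamics/jump/cost limits. -/
def FLset {m d N : ℕ} {E : Type} [Fintype E] (e : Fin N → Vec m) (A : Set (Vec d))
    (f : E → Vec m → Vec d → Vec m) (lam : Vec m → E → Vec d → ℝ)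
    (Q : Vec m → E → E → Vec d → ℝ) (l : E → Vec m → Vec d → ℝ)
    (x : Vec m) (γ : E) : Set (Vec m × (E → ℝ) × ℝ) :=
  {p | p.1 ∈ TangentG e x ∧ (∀ γ' : E, 0 ≤ p.2.1 γ') ∧
    ∃ (αs : ℕ → ℝ → Vec d) (ys : ℕ → ℝ → Vec m) (ts : ℕ → ℝ),
      (∀ n, AdmPair (f γ) A (Gbar e) x (αs n) (ys n)) ∧
      (∀ n, 0 < ts n) ∧ Tendsto ts atTop (nhds 0) ∧
      Tendsto (fun n => (ts n)⁻¹ • (∫ s in (0:ℝ)..ts n, f γ x (αs n s)))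
        atTop (nhds p.1) ∧
      (∀ γ' : E, Tendsto
          (fun n => (ts n)⁻¹ * ∫ s in (0:ℝ)..ts n, lam x γ (αs n s) * Q x γ γ' (αs n s))
          atTop (nhds (p.2.1 γ'))) ∧
      Tendsto (fun n => (ts n)⁻¹ * ∫ s in (0:ℝ)..ts n, l γ x (αs n s))
        atTop (nhds p.2.2)}

/-!
Fix the mode `γ`. Since `λ` and `Q` do not depend on the control, `v_{M+1}(·, γ)` is the value of
a deterministic infinite-horizon problem with discount factor `e^{-δt} Λ(t)` and running cost
`l_γ + λ ∑_{γ'} Q v_M(·, γ')`, which is continuous and bounded on `Ḡ × A` because `v_M` is.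
Cutting an admissible trajectory at time `T` splits its cost into the cost on `[0, T]` plus
`e^{-δT} Λ(T)` times the cost of the shifted trajectory, and conversely any admissible trajectory
started at `y(T)` can be appended. Taking infima over both pieces gives the principle.
-/

open scoped Interval

theorem sInf_image_eq_of_split_of_join {X P : Type*} {adm : X → Set P} {J h D : P → ℝ}
    {z : P → X} {V : X → ℝ} (hV : ∀ x, ∀ p ∈ adm x, V (z p) = sInf (J '' adm (z p)))
    (hbdd : ∀ x, BddBelow (J '' adm x)) (hD : ∀ x, ∀ p ∈ adm x, 0 ≤ D p)
    (hsplit : ∀ x, ∀ p ∈ adm x, ∃ q ∈ adm (z p), J p = h p + D p * J q)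
    (hjoin : ∀ x, ∀ p ∈ adm x, ∀ q ∈ adm (z p), ∃ r ∈ adm x, J r = h p + D p * J q)
    (x : X) :
    sInf (J '' adm x) = sInf ((fun p => h p + D p * V (z p)) '' adm x) := by
  have hle_split : ∀ p ∈ adm x, sInf (J '' adm x) ≤ h p + D p * V (z p) := by
    intro p hp
    obtain ⟨q, hq, -⟩ := hsplit x p hp
    have hmono : Monotone fun c => h p + D p * c := fun a b hab => by
      simpa using mul_le_mul_of_nonneg_left hab (hD x p hp)
    have hne : (J '' adm (z p)).Nonempty := ⟨_, q, hq, rfl⟩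
    rw [hV x p hp, hmono.map_csInf_of_continuousAt (by fun_prop) hne (hbdd _), ← Set.image_comp]
    refine csInf_le_csInf (hbdd x) ⟨_, q, hq, rfl⟩ ?_
    rintro _ ⟨q, hq, rfl⟩
    obtain ⟨r, hr, hJr⟩ := hjoin x p hp q hq
    exact ⟨r, hr, hJr⟩
  rcases (adm x).eq_empty_or_nonempty with hx | hx
  · simp [hx]
  refine le_antisymm (le_csInf (hx.image _) ?_) (le_csInf (hx.image _) ?_)
  · rintro _ ⟨p, hp, rfl⟩
    exact hle_split p hp
  · rintro _ ⟨p, hp, rfl⟩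
    obtain ⟨q, hq, hJp⟩ := hsplit x p hp
    have hbddD : BddBelow ((fun p => h p + D p * V (z p)) '' adm x) :=
      ⟨_, by rintro _ ⟨p, hp, rfl⟩; exact hle_split p hp⟩
    calc sInf ((fun p => h p + D p * V (z p)) '' adm x) ≤ h p + D p * V (z p) :=
          csInf_le hbddD ⟨p, hp, rfl⟩
      _ ≤ J p := by
          rw [hJp, hV x p hp]
          gcongr
          · exact hD x p hp
          · exact csInf_le (hbdd _) ⟨q, hq, rfl⟩

theorem ContinuousOn.measurable_comp_of_forall_mem {X Y Z : Type*} [TopologicalSpace X]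
    [MeasurableSpace X] [OpensMeasurableSpace X] [TopologicalSpace Y] [MeasurableSpace Y]
    [BorelSpace Y] [MeasurableSpace Z] {g : X → Y} {s : Set X} (hg : ContinuousOn g s)
    {φ : Z → X} (hφ : Measurable φ) (hφs : ∀ z, φ z ∈ s) : Measurable fun z => g (φ z) :=
  hg.domRestrict.measurable.comp (hφ.subtype_mk (h := hφs))

theorem continuousOn_primitive_Ici {F : Type*} [NormedAddCommGroup F] [NormedSpace ℝ F]
    {f : ℝ → F} {a : ℝ} (hf : ∀ b, IntegrableOn f (Ioc a b)) :
    ContinuousOn (fun t => ∫ s in a..t, f s) (Ici a) := by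
  intro t ht
  have hint : IntervalIntegrable f volume a (t + 1) :=
    (intervalIntegrable_iff_integrableOn_Ioc_of_le (by linarith [mem_Ici.1 ht])).2 (hf _)
  have hnhds : uIcc a (t + 1) ∈ 𝓝[Ici a] t := by
    rw [uIcc_of_le (by linarith [mem_Ici.1 ht]), ← Ici_inter_Iic]
    exact inter_mem_nhdsWithin _ (Iic_mem_nhds (by linarith))
  exact (intervalIntegral.continuousOn_primitive_interval' hint left_mem_uIcc t
    (mem_of_mem_nhdsWithin ht hnhds)).mono_of_mem_nhdsWithin hnhds

theorem ContinuousOn.integrableOn_Ioc_of_Ici {F : Type*} [NormedAddCommGroup F]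
    {f : ℝ → F} {a : ℝ} (hf : ContinuousOn f (Ici a)) (b : ℝ) : IntegrableOn f (Ioc a b) :=
  ((hf.mono Icc_subset_Ici_self).integrableOn_Icc).mono_set Ioc_subset_Icc_self

theorem IntervalIntegrable.of_forall_integrableOn_Ioc {F : Type*} [NormedAddCommGroup F]
    {f : ℝ → F} {a b c : ℝ} (hf : ∀ t, IntegrableOn f (Ioc a t)) (hb : a ≤ b) (hc : a ≤ c) :
    IntervalIntegrable f volume b c :=
  intervalIntegrable_iff.2 ((hf (max b c)).mono_set (Ioc_subset_Ioc_left (le_min hb hc)))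

theorem aestronglyMeasurable_Ioc_of_forall_lt {F : Type*} [NormedAddCommGroup F] {g : ℝ → F}
    {a u : ℝ}
    (h : ∀ s < u, AEStronglyMeasurable g (volume.restrict (Ioc a s))) :
    AEStronglyMeasurable g (volume.restrict (Ioc a u)) := by
  have hcover : Ioc a u ⊆ (⋃ n : ℕ, Ioc a (u - 1 / (n + 1))) ∪ {u} := by
    rintro s ⟨has, hsu⟩
    rcases hsu.lt_or_eq with hsu | rfl
    · obtain ⟨n, hn⟩ := exists_nat_one_div_lt (sub_pos.2 hsu)
      exact Or.inl (mem_iUnion.2 ⟨n, has, by linarith⟩)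
    · exact Or.inr rfl
  refine AEStronglyMeasurable.mono_set hcover ?_
  rw [aestronglyMeasurable_union_iff, aestronglyMeasurable_iUnion_iff,
    Measure.restrict_eq_zero.2 (measure_singleton u)]
  exact ⟨fun n => h _ (sub_lt_self u (by positivity)), aestronglyMeasurable_zero_measure g⟩

theorem integrableOn_exp_neg_mul_Ioi {δ : ℝ} (hδ : 0 < δ) :
    IntegrableOn (fun t : ℝ => exp (-(δ * t))) (Ioi 0) := by
  simpa only [neg_mul] using exp_neg_integrableOn_Ioi 0 hδ

theorem continuous_of_abs_sub_le_mul_norm {X : Type*} [SeminormedAddCommGroup X] {g : X → ℝ}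
    {C : ℝ} (h : ∀ z w, |g z - g w| ≤ C * ‖z - w‖) : Continuous g :=
  (LipschitzWith.of_dist_le' fun z w => by
    simpa [Real.dist_eq, dist_eq_norm] using h z w).continuous

theorem abs_sum_mul_le {ι : Type*} (s : Finset ι) {q w : ι → ℝ} {K : ℝ}
    (hq : ∀ i ∈ s, 0 ≤ q i) (hsum : ∑ i ∈ s, q i = 1) (hw : ∀ i ∈ s, |w i| ≤ K) :
    |∑ i ∈ s, q i * w i| ≤ K :=
  calc |∑ i ∈ s, q i * w i| ≤ ∑ i ∈ s, q i * K := by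
        refine (Finset.abs_sum_le_sum_abs _ _).trans (Finset.sum_le_sum fun i hi => ?_)
        rw [abs_mul, abs_of_nonneg (hq i hi)]
        exact mul_le_mul_of_nonneg_left (hw i hi) (hq i hi)
    _ = K := by rw [← Finset.sum_mul, hsum, one_mul]

def concatAt {β : Type*} (T : ℝ) (u v : ℝ → β) (t : ℝ) : β :=
  if t ≤ T then u t else v (t - T)

section concatAt

variable {β : Type*} {T t : ℝ} {u v : ℝ → β}

theorem concatAt_of_le (h : t ≤ T) : concatAt T u v t = u t := if_pos h

theorem concatAt_of_lt (h : T < t) : concatAt T u v t = v (t - T) := if_neg (not_le.2 h)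

theorem concatAt_add_of_pos (h : 0 < t) : concatAt T u v (T + t) = v t := by
  rw [concatAt_of_lt (lt_add_of_pos_right T h), add_sub_cancel_left]

theorem concatAt_add (huv : v 0 = u T) (h : 0 ≤ t) : concatAt T u v (T + t) = v t := by
  rcases h.lt_or_eq with h | rfl
  · exact concatAt_add_of_pos h
  · rw [add_zero, concatAt_of_le le_rfl, huv]

end concatAt

namespace IsTraj

variable {m : ℕ} {U : Type} {F : Vec m → U → Vec m} {x : Vec m} {α α' : ℝ → U}
  {y y' : ℝ → Vec m} {C T : ℝ}

theorem apply_zero (hy : IsTraj F x α y) : y 0 = x := by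
  simpa using hy 0 le_rfl

/-- `IsTraj` does not presuppose integrability of `s ↦ F (y s) (α s)`: where it fails the integral
is `0`. So beyond the infimum `u` of the times where it fails, `y = x` and the integrand is the
measurable `F x (α s)`; being bounded, it is then integrable on every `(0, t]`, a contradiction. -/
theorem integrableOn_Ioc (hy : IsTraj F x α y) (hmeas : Measurable fun s => F x (α s))
    (hbdd : ∀ s, ‖F (y s) (α s)‖ ≤ C) (t : ℝ) :
    IntegrableOn (fun s => F (y s) (α s)) (Ioc 0 t) := by
  set g : ℝ → Vec m := fun s => F (y s) (α s)
  have hint_iff : ∀ t, IntegrableOn g (Ioc 0 t) ↔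
      AEStronglyMeasurable g (volume.restrict (Ioc 0 t)) := fun t =>
    ⟨fun h => h.1, fun h => (integrableOn_const (C := C) (by simp)).mono' h (ae_of_all _ hbdd)⟩
  by_contra ht
  set bad := {t | ¬ IntegrableOn g (Ioc 0 t)}
  have hbad_nonneg : ∀ s ∈ bad, 0 ≤ s := fun s hs => by
    by_contra hneg
    exact hs (by simp [Ioc_eq_empty (not_lt.2 (not_le.1 hneg).le)])
  have hbdd_bad : BddBelow bad := ⟨0, hbad_nonneg⟩
  set u := sInf bad
  have hu : 0 ≤ u := le_csInf ⟨t, ht⟩ hbad_nonneg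
  have hconst : ∀ s, u < s → y s = x := fun s hs => by
    obtain ⟨s', hs', hs's⟩ := exists_lt_of_csInf_lt ⟨t, ht⟩ hs
    have hs0 : 0 ≤ s := (hbad_nonneg s' hs').trans hs's.le
    have hnot : ¬ IntervalIntegrable g volume 0 s := fun h =>
      hs' (((intervalIntegrable_iff_integrableOn_Ioc_of_le hs0).1 h).mono_set
        (Ioc_subset_Ioc_right hs's.le))
    have hys := hy s hs0
    change y s = x + ∫ r in (0:ℝ)..s, g r at hys
    rwa [intervalIntegral.integral_undef hnot, add_zero] at hys
  have hbefore : AEStronglyMeasurable g (volume.restrict (Ioc 0 u)) :=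
    aestronglyMeasurable_Ioc_of_forall_lt fun s hs =>
      (hint_iff s).1 (not_not.1 fun h => not_le.2 hs (csInf_le hbdd_bad h))
  have hafter : AEStronglyMeasurable g (volume.restrict (Ioc u t)) :=
    hmeas.aestronglyMeasurable.congr (ae_restrict_of_forall_mem measurableSet_Ioc
      fun s hs => by simp only [g, hconst s hs.1])
  apply ht
  rw [hint_iff, ← Ioc_union_Ioc_eq_Ioc hu (csInf_le hbdd_bad ht),
    aestronglyMeasurable_union_iff]
  exact ⟨hbefore, hafter⟩

theorem continuousOn (hy : IsTraj F x α y)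
    (hg : ∀ t, IntegrableOn (fun s => F (y s) (α s)) (Ioc 0 t)) : ContinuousOn y (Ici 0) :=
  (continuousOn_const.add (continuousOn_primitive_Ici hg)).congr fun t ht => hy t ht

theorem comp_add (hy : IsTraj F x α y)
    (hg : ∀ t, IntegrableOn (fun s => F (y s) (α s)) (Ioc 0 t)) (hT : 0 ≤ T) :
    IsTraj F (y T) (fun s => α (T + s)) (fun s => y (T + s)) := by
  intro t ht
  change y (T + t) = y T + ∫ s in (0:ℝ)..t, F (y (T + s)) (α (T + s))
  rw [hy (T + t) (by linarith), hy T hT, add_assoc,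
    intervalIntegral.integral_comp_add_left (fun s => F (y s) (α s)), add_zero,
    intervalIntegral.integral_add_adjacent_intervals
      (.of_forall_integrableOn_Ioc hg le_rfl hT) (.of_forall_integrableOn_Ioc hg hT (by linarith))]

theorem concat (hy : IsTraj F x α y)
    (hg : ∀ t, IntegrableOn (fun s => F (y s) (α s)) (Ioc 0 t)) (hy' : IsTraj F (y T) α' y')
    (hg' : ∀ t, IntegrableOn (fun s => F (y' s) (α' s)) (Ioc 0 t)) (hT : 0 ≤ T) :
    IsTraj F x (concatAt T α α') (concatAt T y y') := by
  set gc : ℝ → Vec m := fun s => F (concatAt T y y' s) (concatAt T α α' s)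
  have hbefore : ∀ t, t ≤ T → EqOn gc (fun s => F (y s) (α s)) (Ι 0 t) :=
    fun t htT s hs => by
      have hsT : s ≤ T := hs.2.trans (max_le hT htT)
      simp only [gc, concatAt_of_le hsT]
  have hafter : ∀ t, T ≤ t → EqOn gc (fun s => F (y' (s - T)) (α' (s - T))) (Ι T t) :=
    fun t hTt s hs => by
      have hTs : T < s := by simpa [min_eq_left hTt] using hs.1
      simp only [gc, concatAt_of_lt hTs]
  intro t ht
  rcases le_or_gt t T with htT | hTt
  · rw [concatAt_of_le htT, hy t ht, intervalIntegral.integral_congr_ae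
      (ae_of_all _ fun s hs => hbefore t htT hs)]
  · have h0T : IntervalIntegrable gc volume 0 T :=
      (intervalIntegrable_congr (hbefore T le_rfl)).2 (.of_forall_integrableOn_Ioc hg le_rfl hT)
    have hTt' : IntervalIntegrable gc volume T t := by
      refine (intervalIntegrable_congr (hafter t hTt.le)).2 ?_
      simpa using (IntervalIntegrable.of_forall_integrableOn_Ioc hg' le_rfl
        (sub_nonneg.2 hTt.le)).comp_sub_right T
    rw [← intervalIntegral.integral_add_adjacent_intervals h0T hTt',
      intervalIntegral.integral_congr_ae (ae_of_all _ fun s hs => hbefore T le_rfl hs),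
      intervalIntegral.integral_congr_ae (ae_of_all _ fun s hs => hafter t hTt.le hs),
      intervalIntegral.integral_comp_sub_right (fun s => F (y' s) (α' s)), sub_self,
      concatAt_of_lt hTt, hy' (t - T) (sub_nonneg.2 hTt.le), hy T hT, add_assoc]

end IsTraj

section DiscountedCost

variable {m : ℕ} {U : Type} {δ K T : ℝ} {L : Vec m → ℝ} {R : Vec m → U → ℝ}
  {α : ℝ → U} {y : ℝ → Vec m}

def discountFactor (δ : ℝ) (L : Vec m → ℝ) (y : ℝ → Vec m) (t : ℝ) : ℝ :=
  exp (-(δ * t)) * exp (-(∫ s in (0:ℝ)..t, L (y s)))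

def discountedCost (δ : ℝ) (L : Vec m → ℝ) (R : Vec m → U → ℝ) (α : ℝ → U)
    (y : ℝ → Vec m) (t : ℝ) : ℝ :=
  discountFactor δ L y t * R (y t) (α t)

theorem discountFactor_pos (t : ℝ) : 0 < discountFactor δ L y t := by
  unfold discountFactor; positivity

theorem discountFactor_le_exp (hL : ∀ z, 0 ≤ L z) {t : ℝ} (ht : 0 ≤ t) :
    discountFactor δ L y t ≤ exp (-(δ * t)) := by
  refine mul_le_of_le_one_right (exp_pos _).le (exp_le_one_iff.2 (neg_nonpos.2 ?_))
  exact intervalIntegral.integral_nonneg ht fun s _ => hL _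

theorem abs_discountedCost_le (hL : ∀ z, 0 ≤ L z) (hR : ∀ t, 0 ≤ t → |R (y t) (α t)| ≤ K)
    {t : ℝ} (ht : 0 ≤ t) : |discountedCost δ L R α y t| ≤ K * exp (-(δ * t)) := by
  rw [discountedCost, abs_mul, abs_of_pos (discountFactor_pos t), mul_comm]
  exact mul_le_mul (hR t ht) (discountFactor_le_exp hL ht) (discountFactor_pos t).le
    ((abs_nonneg _).trans (hR t ht))

theorem abs_integral_discountedCost_le (hδ : 0 < δ) (hL : ∀ z, 0 ≤ L z)
    (hR : ∀ t, 0 ≤ t → |R (y t) (α t)| ≤ K) :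
    |∫ t in Ioi 0, discountedCost δ L R α y t| ≤ K / δ := by
  have hexp : ∫ t in Ioi (0:ℝ), exp (-(δ * t)) = 1 / δ := by
    simpa [neg_mul, ← neg_div] using integral_exp_mul_Ioi (neg_lt_zero.2 hδ) 0
  calc |∫ t in Ioi 0, discountedCost δ L R α y t|
      ≤ ∫ t in Ioi 0, K * exp (-(δ * t)) := by
        rw [← Real.norm_eq_abs]
        refine norm_integral_le_of_norm_le ((integrableOn_exp_neg_mul_Ioi hδ).const_mul K) ?_
        exact ae_restrict_of_forall_mem measurableSet_Ioi fun t ht =>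
          abs_discountedCost_le hL hR (le_of_lt ht)
    _ = K / δ := by rw [integral_const_mul, hexp, mul_one_div]

theorem continuousOn_discountFactor (hL : Continuous L) (hy : ContinuousOn y (Ici 0)) :
    ContinuousOn (discountFactor δ L y) (Ici 0) := by
  have hint := continuousOn_primitive_Ici ((hL.comp_continuousOn hy).integrableOn_Ioc_of_Ici)
  unfold discountFactor
  fun_prop

theorem discountFactor_add (hL : Continuous L) (hy : ContinuousOn y (Ici 0)) (hT : 0 ≤ T)
    {t : ℝ} (ht : 0 ≤ t) :
    discountFactor δ L y (T + t)
      = discountFactor δ L y T * discountFactor δ L (fun s => y (T + s)) t := by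
  have hLy : ∀ a b, 0 ≤ a → 0 ≤ b → IntervalIntegrable (fun s => L (y s)) volume a b :=
    fun a b ha hb => ((hL.comp_continuousOn hy).mono fun s hs =>
      mem_Ici.2 (le_trans (le_min ha hb) hs.1)).intervalIntegrable
  have hsplit : ∫ s in (0:ℝ)..T + t, L (y s)
      = (∫ s in (0:ℝ)..T, L (y s)) + ∫ s in (0:ℝ)..t, L (y (T + s)) := by
    rw [← intervalIntegral.integral_add_adjacent_intervals (hLy 0 T le_rfl hT)
      (hLy T (T + t) hT (by linarith)),
      intervalIntegral.integral_comp_add_left (fun s => L (y s)), add_zero]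
  simp only [discountFactor, hsplit, mul_add, neg_add, exp_add]
  ring

theorem integrableOn_discountedCost (hδ : 0 < δ) (hL : Continuous L) (hLnn : ∀ z, 0 ≤ L z)
    (hy : ContinuousOn y (Ici 0))
    (hRm : AEStronglyMeasurable (fun t => R (y t) (α t)) (volume.restrict (Ioi 0)))
    (hRb : ∀ t, 0 ≤ t → |R (y t) (α t)| ≤ K) :
    IntegrableOn (discountedCost δ L R α y) (Ioi 0) := by
  refine ((integrableOn_exp_neg_mul_Ioi hδ).const_mul K).mono' ?_ ?_
  · exact (((continuousOn_discountFactor hL hy).mono Ioi_subset_Ici_self).aestronglyMeasurable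
      measurableSet_Ioi).mul hRm
  · exact ae_restrict_of_forall_mem measurableSet_Ioi fun t ht =>
      abs_discountedCost_le hLnn hRb (le_of_lt ht)

theorem integral_discountedCost_eq_add (hL : Continuous L) (hy : ContinuousOn y (Ici 0))
    (hint : IntegrableOn (discountedCost δ L R α y) (Ioi 0)) (hT : 0 ≤ T) :
    ∫ t in Ioi 0, discountedCost δ L R α y t
      = (∫ t in (0:ℝ)..T, discountedCost δ L R α y t) + discountFactor δ L y T *
          ∫ t in Ioi 0, discountedCost δ L R (fun s => α (T + s)) (fun s => y (T + s)) t := by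
  rw [← intervalIntegral.integral_interval_add_Ioi hint (hint.mono_set (Ioi_subset_Ioi hT)),
    ← integral_const_mul]
  congr 1
  rw [← (measurePreserving_add_left volume T).setIntegral_preimage_emb
    (measurableEmbedding_addLeft T), preimage_const_add_Ioi, sub_self]
  refine setIntegral_congr_fun measurableSet_Ioi fun t ht => ?_
  simp only [discountedCost, discountFactor_add hL hy hT (le_of_lt ht), mul_assoc]

theorem discountFactor_congr {t : ℝ} {y₁ y₂ : ℝ → Vec m}
    (h : ∀ s ∈ Icc 0 t, y₁ s = y₂ s) (ht : 0 ≤ t) :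
    discountFactor δ L y₁ t = discountFactor δ L y₂ t := by
  unfold discountFactor
  rw [intervalIntegral.integral_congr fun s hs => congrArg L (h s (uIcc_of_le ht ▸ hs))]

def totalCost (δ : ℝ) (L : Vec m → ℝ) (R : Vec m → U → ℝ) (α : ℝ → U) (y : ℝ → Vec m) : ℝ :=
  ∫ t in Ioi (0:ℝ), discountedCost δ L R α y t

end DiscountedCost

namespace AdmPair

variable {m : ℕ} {U : Type} [TopologicalSpace U] [MeasurableSpace U] [OpensMeasurableSpace U]
  {F : Vec m → U → Vec m} {A : Set U} {S : Set (Vec m)} {C T : ℝ} {x : Vec m}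
  {α α' : ℝ → U} {y y' : ℝ → Vec m}

theorem integrableOn_Ioc (hF : ContinuousOn (Function.uncurry F) (univ ×ˢ A))
    (hFb : ∀ z, ∀ a ∈ A, ‖F z a‖ ≤ C) (hp : AdmPair F A S x α y) (t : ℝ) :
    IntegrableOn (fun s => F (y s) (α s)) (Ioc 0 t) :=
  hp.2.2.1.integrableOn_Ioc
    (hF.measurable_comp_of_forall_mem (measurable_const.prodMk hp.1) fun s =>
      ⟨mem_univ _, hp.2.1 s⟩)
    (fun s => hFb _ _ (hp.2.1 s)) t

theorem continuousOn (hF : ContinuousOn (Function.uncurry F) (univ ×ˢ A))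
    (hFb : ∀ z, ∀ a ∈ A, ‖F z a‖ ≤ C) (hp : AdmPair F A S x α y) : ContinuousOn y (Ici 0) :=
  hp.2.2.1.continuousOn (hp.integrableOn_Ioc hF hFb)

theorem comp_add (hF : ContinuousOn (Function.uncurry F) (univ ×ˢ A))
    (hFb : ∀ z, ∀ a ∈ A, ‖F z a‖ ≤ C) (hp : AdmPair F A S x α y) (hT : 0 ≤ T) :
    AdmPair F A S (y T) (fun s => α (T + s)) (fun s => y (T + s)) :=
  ⟨hp.1.comp (measurable_const_add T), fun _ => hp.2.1 _,
    hp.2.2.1.comp_add (hp.integrableOn_Ioc hF hFb) hT,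
    fun _ hs => hp.2.2.2 _ (add_nonneg hT hs)⟩

theorem concat (hF : ContinuousOn (Function.uncurry F) (univ ×ˢ A))
    (hFb : ∀ z, ∀ a ∈ A, ‖F z a‖ ≤ C) (hp : AdmPair F A S x α y)
    (hp' : AdmPair F A S (y T) α' y') (hT : 0 ≤ T) :
    AdmPair F A S x (concatAt T α α') (concatAt T y y') := by
  refine ⟨Measurable.ite measurableSet_Iic hp.1 (hp'.1.comp (measurable_sub_const T)),
    fun t => ?_, hp.2.2.1.concat (hp.integrableOn_Ioc hF hFb) hp'.2.2.1
      (hp'.integrableOn_Ioc hF hFb) hT, fun t ht => ?_⟩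
  · rcases le_or_gt t T with h | h
    · exact concatAt_of_le h ▸ hp.2.1 t
    · exact concatAt_of_lt h ▸ hp'.2.1 _
  · rcases le_or_gt t T with h | h
    · exact concatAt_of_le h ▸ hp.2.2.2 t ht
    · exact concatAt_of_lt h ▸ hp'.2.2.2 _ (sub_nonneg.2 h.le)

/-- `y` is only known to be continuous on `[0, ∞)`; `t ↦ y (max t 0)` is continuous on `ℝ` and
agrees with `y` on `(0, ∞)`. -/
theorem aestronglyMeasurable_comp {R : Vec m → U → ℝ}
    (hR : ContinuousOn (Function.uncurry R) (S ×ˢ A)) (hp : AdmPair F A S x α y)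
    (hy : ContinuousOn y (Ici 0)) :
    AEStronglyMeasurable (fun t => R (y t) (α t)) (volume.restrict (Ioi 0)) := by
  have hc : Continuous fun t => y (max t 0) :=
    hy.comp_continuous (continuous_id.max continuous_const) fun t => le_max_right t 0
  have hm : Measurable fun t => R (y (max t 0)) (α t) :=
    hR.measurable_comp_of_forall_mem (hc.measurable.prodMk hp.1) fun t =>
      ⟨hp.2.2.2 _ (le_max_right _ _), hp.2.1 t⟩
  exact hm.aestronglyMeasurable.congr (ae_restrict_of_forall_mem measurableSet_Ioi
    fun t ht => by simp only [max_eq_left (le_of_lt (mem_Ioi.1 ht))])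

variable {δ K : ℝ} {L : Vec m → ℝ} {R : Vec m → U → ℝ}

theorem integrableOn_discountedCost (hδ : 0 < δ)
    (hF : ContinuousOn (Function.uncurry F) (univ ×ˢ A)) (hFb : ∀ z, ∀ a ∈ A, ‖F z a‖ ≤ C)
    (hL : Continuous L) (hLnn : ∀ z, 0 ≤ L z) (hR : ContinuousOn (Function.uncurry R) (S ×ˢ A))
    (hRb : ∀ z ∈ S, ∀ a ∈ A, |R z a| ≤ K) (hp : AdmPair F A S x α y) :
    IntegrableOn (discountedCost δ L R α y) (Ioi 0) :=
  _root_.integrableOn_discountedCost hδ hL hLnn (hp.continuousOn hF hFb)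
    (hp.aestronglyMeasurable_comp hR (hp.continuousOn hF hFb))
    fun t ht => hRb _ (hp.2.2.2 t ht) _ (hp.2.1 t)

theorem totalCost_concat (hδ : 0 < δ)
    (hF : ContinuousOn (Function.uncurry F) (univ ×ˢ A)) (hFb : ∀ z, ∀ a ∈ A, ‖F z a‖ ≤ C)
    (hL : Continuous L) (hLnn : ∀ z, 0 ≤ L z) (hR : ContinuousOn (Function.uncurry R) (S ×ˢ A))
    (hRb : ∀ z ∈ S, ∀ a ∈ A, |R z a| ≤ K) (hp : AdmPair F A S x α y)
    (hp' : AdmPair F A S (y T) α' y') (hT : 0 ≤ T) :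
    totalCost δ L R (concatAt T α α') (concatAt T y y')
      = (∫ t in (0:ℝ)..T, discountedCost δ L R α y t)
        + discountFactor δ L y T * totalCost δ L R α' y' := by
  have hpc := hp.concat hF hFb hp' hT
  have hy'0 : y' 0 = y T := hp'.2.2.1.apply_zero
  rw [totalCost, integral_discountedCost_eq_add hL (hpc.continuousOn hF hFb)
    (hpc.integrableOn_discountedCost hδ hF hFb hL hLnn hR hRb) hT,
    discountFactor_congr (fun s hs => concatAt_of_le hs.2) hT]
  congr 1
  · refine intervalIntegral.integral_congr fun t ht => ?_
    rw [uIcc_of_le hT] at ht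
    simp only [discountedCost, concatAt_of_le ht.2,
      discountFactor_congr (fun s hs => concatAt_of_le (hs.2.trans ht.2)) ht.1]
  · refine congrArg _ (setIntegral_congr_fun measurableSet_Ioi fun t ht => ?_)
    simp only [discountedCost, concatAt_add_of_pos (mem_Ioi.1 ht),
      discountFactor_congr (fun s hs => concatAt_add hy'0 hs.1) (le_of_lt ht)]

end AdmPair

def admissiblePairs {m : ℕ} {U : Type} [MeasurableSpace U] (F : Vec m → U → Vec m) (A : Set U)
    (S : Set (Vec m)) (x : Vec m) : Set ((ℝ → U) × (ℝ → Vec m)) :=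
  {p | AdmPair F A S x p.1 p.2}

theorem sInf_totalCost_eq_sInf_integral_add_mul {m : ℕ} {U : Type} [TopologicalSpace U]
    [MeasurableSpace U] [OpensMeasurableSpace U] {F : Vec m → U → Vec m} {A : Set U}
    {S : Set (Vec m)} {C K δ T : ℝ} {L : Vec m → ℝ} {R : Vec m → U → ℝ} (hδ : 0 < δ)
    (hF : ContinuousOn (Function.uncurry F) (univ ×ˢ A)) (hFb : ∀ z, ∀ a ∈ A, ‖F z a‖ ≤ C)
    (hL : Continuous L) (hLnn : ∀ z, 0 ≤ L z) (hR : ContinuousOn (Function.uncurry R) (S ×ˢ A))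
    (hRb : ∀ z ∈ S, ∀ a ∈ A, |R z a| ≤ K) (hT : 0 ≤ T) {V : Vec m → ℝ}
    (hV : ∀ z ∈ S, V z = sInf ((fun p => totalCost δ L R p.1 p.2) '' admissiblePairs F A S z))
    (x : Vec m) :
    sInf ((fun p => totalCost δ L R p.1 p.2) '' admissiblePairs F A S x)
      = sInf ((fun p => (∫ t in (0:ℝ)..T, discountedCost δ L R p.1 p.2 t)
          + discountFactor δ L p.2 T * V (p.2 T)) '' admissiblePairs F A S x) := by
  refine sInf_image_eq_of_split_of_join (z := fun p => p.2 T)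
    (fun _ p hp => hV _ (hp.2.2.2 T hT)) (fun _ => ⟨-(K / δ), ?_⟩)
    (fun _ p _ => (discountFactor_pos T).le) (fun _ p hp => ?_) (fun _ p hp q hq => ?_) x
  · rintro _ ⟨p, hp, rfl⟩
    exact neg_le_of_abs_le (abs_integral_discountedCost_le hδ hLnn fun t ht =>
      hRb _ (hp.2.2.2 t ht) _ (hp.2.1 t))
  · exact ⟨(fun s => p.1 (T + s), fun s => p.2 (T + s)), hp.comp_add hF hFb hT,
      integral_discountedCost_eq_add hL (hp.continuousOn hF hFb)
        (hp.integrableOn_discountedCost hδ hF hFb hL hLnn hR hRb) hT⟩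
  · exact ⟨(concatAt T p.1 q.1, concatAt T p.2 q.2), hp.concat hF hFb hq hT,
      hp.totalCost_concat hδ hF hFb hL hLnn hR hRb hq hT⟩

theorem isCompact_Gbar {m N : ℕ} (e : Fin N → Vec m) : IsCompact (Gbar e) :=
  isCompact_iUnion fun _ => isCompact_Icc.image (continuous_id.smul continuous_const)

section JumpCost

variable {m : ℕ} {U E : Type} [Fintype E] {l : E → Vec m → U → ℝ} {lam : Vec m → E → ℝ}
  {Q : Vec m → E → E → ℝ} {w : Vec m → E → ℝ} {γ : E}

def jumpCost (l : E → Vec m → U → ℝ) (lam : Vec m → E → ℝ) (Q : Vec m → E → E → ℝ)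
    (w : Vec m → E → ℝ) (γ : E) (z : Vec m) (a : U) : ℝ :=
  l γ z a + lam z γ * ∑ γ' : E, Q z γ γ' * w z γ'

theorem continuousOn_jumpCost [TopologicalSpace U] {A : Set U} {S : Set (Vec m)}
    (hl : ContinuousOn (Function.uncurry (l γ)) (univ ×ˢ A)) (hlam : Continuous fun z => lam z γ)
    (hQ : ∀ γ', Continuous fun z => Q z γ γ') (hw : ∀ γ', ContinuousOn (fun z => w z γ') S) :
    ContinuousOn (Function.uncurry (jumpCost l lam Q w γ)) (S ×ˢ A) :=
  (hl.mono (prod_mono (subset_univ S) subset_rfl)).add <|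
    (hlam.comp continuous_fst).continuousOn.mul <| continuousOn_finsetSum _ fun γ' _ =>
      ((hQ γ').comp continuous_fst).continuousOn.mul
        ((hw γ').comp continuousOn_fst fun _ hp => hp.1)

theorem abs_jumpCost_le {C K : ℝ} {z : Vec m} {a : U} (hl : |l γ z a| ≤ C)
    (hlam : 0 ≤ lam z γ ∧ lam z γ ≤ C) (hQ : ∀ γ', 0 ≤ Q z γ γ') (hQsum : ∑ γ', Q z γ γ' = 1)
    (hw : ∀ γ', |w z γ'| ≤ K) : |jumpCost l lam Q w γ z a| ≤ C + C * K := by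
  have hsum := abs_sum_mul_le Finset.univ (fun γ' _ => hQ γ') hQsum fun γ' _ => hw γ'
  calc |jumpCost l lam Q w γ z a|
      ≤ |l γ z a| + lam z γ * |∑ γ', Q z γ γ' * w z γ'| := by
        rw [jumpCost, ← abs_of_nonneg hlam.1, ← abs_mul, abs_of_nonneg hlam.1]
        exact abs_add_le _ _
    _ ≤ C + C * K := add_le_add hl (mul_le_mul hlam.2 hsum (abs_nonneg _) (hlam.1.trans hlam.2))

end JumpCost

theorem setOf_exists_eq_image_prod {α β γ : Type*} (P : α → β → Prop) (g : α → β → γ) :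
    {c | ∃ a b, P a b ∧ c = g a b} = (fun p : α × β => g p.1 p.2) '' {p | P p.1 p.2} := by
  ext c
  constructor
  · rintro ⟨a, b, hab, rfl⟩
    exact ⟨(a, b), hab, rfl⟩
  · rintro ⟨⟨a, b⟩, hab, rfl⟩
    exact ⟨a, b, hab, rfl⟩

theorem iterSet_eq_image {m : ℕ} {U E : Type} [MeasurableSpace U] [Fintype E] (δ : ℝ)
    (f : E → Vec m → U → Vec m) (A : E → Set U) (S : Set (Vec m)) (l : E → Vec m → U → ℝ)
    (lam : Vec m → E → ℝ) (Q : Vec m → E → E → ℝ) (w : Vec m → E → ℝ) (x : Vec m) (γ : E) :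
    iterSet δ f A S l (fun z γ' _ => lam z γ') (fun z γ' γ'' _ => Q z γ' γ'') w x γ
      = (fun p => totalCost δ (fun z => lam z γ) (jumpCost l lam Q w γ) p.1 p.2) ''
          admissiblePairs (f γ) (A γ) S x :=
  setOf_exists_eq_image_prod _ _

theorem dppSet_eq_image {m : ℕ} {U E : Type} [MeasurableSpace U] [Fintype E] (δ T : ℝ)
    (f : E → Vec m → U → Vec m) (A : E → Set U) (S : Set (Vec m)) (l : E → Vec m → U → ℝ)
    (lam : Vec m → E → ℝ) (Q : Vec m → E → E → ℝ) (wcont wend : Vec m → E → ℝ) (x : Vec m)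
    (γ : E) :
    dppSet δ T f A S l (fun z γ' _ => lam z γ') (fun z γ' γ'' _ => Q z γ' γ'') wcont wend x γ
      = (fun p => (∫ t in (0:ℝ)..T,
            discountedCost δ (fun z => lam z γ) (jumpCost l lam Q wcont γ) p.1 p.2 t)
          + discountFactor δ (fun z => lam z γ) p.2 T * wend (p.2 T) γ) ''
          admissiblePairs (f γ) (A γ) S x :=
  setOf_exists_eq_image_prod _ _

theorem dpp_iterated_value_general
    (m d N : ℕ)
    (E : Type) [Fintype E]
    (e : Fin N → Vec m)
    (A : Set (Vec d))
    (f : E → Vec m → Vec d → Vec m)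
    (C : ℝ) (hA1 : AssumptionA1 A f C)
    (δ : ℝ) (hδ : 0 < δ)
    (l : E → Vec m → Vec d → ℝ) (hA4 : AssumptionA4 A l C)
    (lam0 : Vec m → E → ℝ) (hA2 : AssumptionA2 A (fun x γ _ => lam0 x γ) C)
    (Q0 : Vec m → E → E → ℝ) (hA3 : AssumptionA3 A (fun x γ γ' _ => Q0 x γ γ') C)
    (v : ℕ → Vec m → E → ℝ)
    (hvrec : ∀ n : ℕ, ∀ x ∈ Gbar e, ∀ γ : E,
        v (n+1) x γ = sInf (iterSet δ f (fun _ => A) (Gbar e) l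
          (fun z γ' _ => lam0 z γ') (fun z γ' γ'' _ => Q0 z γ' γ'') (v n) x γ))
    (M : ℕ)
    (hMcont : ∀ γ : E, ContinuousOn (fun x => v M x γ) (Gbar e)) :
    ∀ T > (0:ℝ), ∀ x ∈ Gbar e, ∀ γ : E,
      v (M+1) x γ = sInf (dppSet δ T f (fun _ => A) (Gbar e) l
        (fun z γ' _ => lam0 z γ') (fun z γ' γ'' _ => Q0 z γ' γ'')
        (v M) (v (M+1)) x γ) := by
  intro T hT x hx γ
  rw [hvrec M x hx γ, iterSet_eq_image, dppSet_eq_image]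
  rcases A.eq_empty_or_nonempty with rfl | ⟨a₀, ha₀⟩
  · simp [admissiblePairs, AdmPair]
  obtain ⟨K, hK⟩ := (isCompact_Gbar e).exists_bound_of_continuousOn (continuousOn_pi.2 hMcont)
  have hlam : Continuous fun z => lam0 z γ := (hA2 γ).1.continuousOn.comp_continuous
    (continuous_id.prodMk continuous_const) fun z => ⟨mem_univ z, ha₀⟩
  have hQ : ∀ γ', Continuous fun z => Q0 z γ γ' := fun γ' =>
    continuous_of_abs_sub_le_mul_norm fun z w => (hA3 z w γ a₀ ha₀).2.2.2 γ'
  have hjump : ∀ z ∈ Gbar e, ∀ a ∈ A, |jumpCost l lam0 Q0 (v M) γ z a| ≤ C + C * K :=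
    fun z hz a ha => abs_jumpCost_le ((hA4 γ).2 z z a ha).1
      ⟨((hA2 γ).2 z z a ha).1, ((hA2 γ).2 z z a ha).2.1⟩ (fun γ' => ((hA3 z z γ a ha).1 γ').1)
      (hA3 z z γ a ha).2.1 fun γ' => by
        simpa using (norm_le_pi_norm (v M z) γ').trans (hK z hz)
  exact sInf_totalCost_eq_sInf_integral_add_mul (V := fun z => v (M + 1) z γ) hδ
    (hA1 γ).1.continuousOn (hA1 γ).2.2 hlam (fun z => ((hA2 γ).2 z z a₀ ha₀).1)
    (continuousOn_jumpCost (hA4 γ).1.continuousOn hlam hQ hMcont) hjump hT.le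
    (fun z hz => by rw [hvrec M z hz γ, iterSet_eq_image]) x

/-- Dynamic programming principle for the iterated value functions:
if `λ` and `Q` do not depend on the control and `v_M^δ(·,γ)` is continuous on `Ḡ`,
then for every horizon `T > 0` the iterate `v_{M+1}^δ` equals the infimum over
admissible controls of the discounted one-jump cost up to `T` with continuation
value `v_M^δ` and terminal value `v_{M+1}^δ`. -/
theorem dpp_iterated_value
    (m d N : ℕ) (hm : 1 ≤ m) (hd : 1 ≤ d) (hN : 2 ≤ N)
    (E : Type) [Fintype E] [Nonempty E]
    (e : Fin N → Vec m) (he : ∀ j, ‖e j‖ = 1) (heinj : Function.Injective e)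
    (A : Set (Vec d)) (hAcomp : IsCompact A)
    (f : E → Vec m → Vec d → Vec m)
    (C : ℝ) (hC : 0 < C) (hA1 : AssumptionA1 A f C)
    (Asets : E → Fin N → Set (Vec d)) (act : Fin N → Set E)
    (β η κc : ℝ) (hβ : 0 < β) (hη : η ∈ Ioo (0:ℝ) 1) (hκ : κc ∈ Ico (0:ℝ) 1)
    (hAa : AssumptionAa e A f Asets β)
    (hAb : AssumptionAb e f Asets act β η κc)
    (δ : ℝ) (hδ : 0 < δ)
    (l : E → Vec m → Vec d → ℝ) (hA4 : AssumptionA4 A l C)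
    (hAc : AssumptionAc l Asets act)
    (lam0 : Vec m → E → ℝ) (hA2 : AssumptionA2 A (fun x γ _ => lam0 x γ) C)
    (Q0 : Vec m → E → E → ℝ) (hA3 : AssumptionA3 A (fun x γ γ' _ => Q0 x γ γ') C)
    (v : ℕ → Vec m → E → ℝ)
    (hv0 : ∀ x ∈ Gbar e, ∀ γ : E,
        v 0 x γ = sInf (v0Set δ f (fun _ => A) (Gbar e) l x γ))
    (hvrec : ∀ n : ℕ, ∀ x ∈ Gbar e, ∀ γ : E,
        v (n+1) x γ = sInf (iterSet δ f (fun _ => A) (Gbar e) l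
          (fun z γ' _ => lam0 z γ') (fun z γ' γ'' _ => Q0 z γ' γ'') (v n) x γ))
    (M : ℕ)
    (hMcont : ∀ γ : E, ContinuousOn (fun x => v M x γ) (Gbar e)) :
    ∀ T > (0:ℝ), ∀ x ∈ Gbar e, ∀ γ : E,
      v (M+1) x γ = sInf (dppSet δ T f (fun _ => A) (Gbar e) l
        (fun z γ' _ => lam0 z γ') (fun z γ' γ'' _ => Q0 z γ' γ'')
        (v M) (v (M+1)) x γ) :=
  dpp_iterated_value_general m d N E e A f C hA1 δ hδ l hA4 lam0 hA2 Q0 hA3 v hvrec M hMcont
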